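/- arXiv:math/0510631 — 2 statements merged into one kernel-verified Lean document; each statement's English description precedes it below -/
import Mathlib

section
/- In Γ = A *_C B, if γ and γ' are two cyclically reduced elements that are conjugate in Γ, then γ and γ' have the same length, |γ| = |γ'|. -/
/-!
Internal characterization of the amalgamated free product `Γ = A *_C B`:
`A` and `B` are subgroups of `Γ` generating `Γ`, the amalgamated subgroup is
`C = A ⊓ B`, and (normal form theorem) the product of any nonempty reduced
sequence is nontrivial.
-/

variable {Γ : Type*} [Group Γ]

/-- `x` and `y` lie in different factors among `A`, `B`. -/
def DiffFactors (A B : Subgroup Γ) (x y : Γ) : Prop :=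
  ¬(x ∈ A ∧ y ∈ A) ∧ ¬(x ∈ B ∧ y ∈ B)

/-- A reduced sequence: every entry lies in `(A ∪ B) \ (A ⊓ B)` and consecutive
entries lie in different factors. -/
def ReducedSeq (A B : Subgroup Γ) (l : List Γ) : Prop :=
  (∀ g ∈ l, (g ∈ A ∨ g ∈ B) ∧ ¬(g ∈ A ∧ g ∈ B)) ∧ l.Chain' (DiffFactors A B)

/-- `Γ` is the amalgamated free product of its subgroups `A` and `B`
along `C = A ⊓ B`. -/
def IsAmalgam (A B : Subgroup Γ) : Prop :=
  A ⊔ B = ⊤ ∧ ∀ l : List Γ, ReducedSeq A B l → l ≠ [] → l.prod ≠ 1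

/-- `g` is cyclically reduced: it has length 1 (it lies in a factor), or it has
a reduced form of length `≥ 2` whose first and last entries lie in different
factors. -/
def AmCyclicallyReduced (A B : Subgroup Γ) (g : Γ) : Prop :=
  (g ∈ A ∨ g ∈ B) ∨
    ∃ l : List Γ, ReducedSeq A B l ∧ l.prod = g ∧ 2 ≤ l.length ∧
      ∃ x y, l.head? = some x ∧ l.getLast? = some y ∧ DiffFactors A B x y

/-- `g` has length `n` in the amalgam: `n = 1` when `g` lies in a factor, and
otherwise `n` is the length of a reduced form of `g`. -/
def AmLength (A B : Subgroup Γ) (g : Γ) (n : ℕ) : Prop :=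
  (n = 1 ∧ (g ∈ A ∨ g ∈ B)) ∨
    ∃ l : List Γ, l ≠ [] ∧ ReducedSeq A B l ∧ l.prod = g ∧ l.length = n

/-!
If `l` is a reduced form of a cyclically reduced element `γ'` of length `≥ 2`, then the
`k`-fold concatenation of `l` is a reduced form of `γ' ^ k`, so `γ' ^ k` has length `k |γ'|`.
Reduced forms are geodesic for the word length over `A ∪ B`, which is subadditive; hence if
`γ' = g γ g⁻¹` then `k |γ'| = |g γ ^ k g⁻¹| ≤ k |γ| + 2 |g|` for every `k`, which forces
`|γ'| ≤ |γ|`. Geodesicity follows by induction on the word from the normal form theorem, since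
multiplying by one element of a factor shortens a reduced form by at most one letter.
-/

section Amalgam

variable {A B : Subgroup Γ}

variable (A B) in
def IsLetter (x : Γ) : Prop :=
  (x ∈ A ∨ x ∈ B) ∧ ¬(x ∈ A ∧ x ∈ B)

variable (A B) in
def IsFactorWord (w : List Γ) : Prop :=
  ∀ x ∈ w, x ∈ A ∨ x ∈ B

lemma DiffFactors.symm {x y : Γ} (h : DiffFactors A B x y) : DiffFactors A B y x :=
  ⟨fun h' => h.1 h'.symm, fun h' => h.2 h'.symm⟩

lemma isFactorWord_singleton {x : Γ} (hx : x ∈ A ∨ x ∈ B) : IsFactorWord A B [x] := by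
  simpa [IsFactorWord] using hx

lemma exists_isFactorWord_prod_eq (hAB : A ⊔ B = ⊤) (g : Γ) :
    ∃ w, IsFactorWord A B w ∧ w.prod = g := by
  have hg : g ∈ (Subgroup.closure ((A : Set Γ) ∪ B)).toSubmonoid := by
    rw [← Subgroup.sup_eq_closure, hAB]; trivial
  rw [Subgroup.closure_toSubmonoid] at hg
  obtain ⟨w, hw, rfl⟩ := Submonoid.exists_list_of_mem_closure hg
  refine ⟨w, fun x hx => ?_, rfl⟩
  simpa [or_or_or_comm] using hw x hx

lemma ReducedSeq.isFactorWord {l : List Γ} (hl : ReducedSeq A B l) : IsFactorWord A B l :=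
  fun x hx => (hl.1 x hx).1

lemma reducedSeq_nil : ReducedSeq A B [] :=
  ⟨by simp, List.isChain_nil⟩

lemma reducedSeq_cons_iff {a : Γ} {l : List Γ} :
    ReducedSeq A B (a :: l) ↔
      IsLetter A B a ∧ ReducedSeq A B l ∧ ∀ y ∈ l.head?, DiffFactors A B a y := by
  simp only [ReducedSeq, IsLetter, List.forall_mem_cons]
  change _ ∧ List.IsChain _ _ ↔ _ ∧ (_ ∧ List.IsChain _ _) ∧ _
  rw [List.isChain_cons]
  tauto

lemma reducedSeq_singleton {a : Γ} (ha : IsLetter A B a) : ReducedSeq A B [a] :=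
  reducedSeq_cons_iff.2 ⟨ha, reducedSeq_nil, by simp⟩

lemma ReducedSeq.mul_head {c y : Γ} {t : List Γ} (hc : c ∈ A ⊓ B)
    (h : ReducedSeq A B (y :: t)) : ReducedSeq A B ((c * y) :: t) := by
  rw [Subgroup.mem_inf] at hc
  simpa only [reducedSeq_cons_iff, IsLetter, DiffFactors, Subgroup.mul_mem_cancel_left _ hc.1,
    Subgroup.mul_mem_cancel_left _ hc.2] using h

lemma IsLetter.mul_left_mem_iff {x y : Γ} (hy : IsLetter A B y)
    (hsame : (x ∈ A ∧ y ∈ A) ∨ (x ∈ B ∧ y ∈ B)) (hxy : x * y ∉ A ⊓ B) :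
    (x * y ∈ A ↔ y ∈ A) ∧ (x * y ∈ B ↔ y ∈ B) := by
  rw [Subgroup.mem_inf] at hxy
  unfold IsLetter at hy
  rcases hsame with ⟨hx, hy'⟩ | ⟨hx, hy'⟩ <;> have := mul_mem hx hy' <;> tauto

lemma ReducedSeq.eq_nil_of_prod_mem (hAB : IsAmalgam A B) {l : List Γ}
    (hl : ReducedSeq A B l) (h : l.prod ∈ A ⊓ B) : l = [] := by
  rcases l with _ | ⟨y, t⟩
  · rfl
  · refine absurd ?_ (hAB.2 _ (hl.mul_head (inv_mem h)) (List.cons_ne_nil _ _))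
    simp only [List.prod_cons]
    group

-- Reduced forms are only taken up to a right factor in `A ⊓ B`: elements of `A ⊓ B` have none.
lemma ReducedSeq.exists_mul_left {l : List Γ} (hl : ReducedSeq A B l) {x : Γ}
    (hx : x ∈ A ∨ x ∈ B) :
    ∃ l', ReducedSeq A B l' ∧ l'.prod⁻¹ * (x * l.prod) ∈ A ⊓ B ∧ l.length ≤ l'.length + 1 := by
  rcases l with _ | ⟨y, t⟩
  · by_cases hxC : x ∈ A ⊓ B
    · exact ⟨[], reducedSeq_nil, by simpa using hxC, by simp⟩
    · exact ⟨[x], reducedSeq_singleton ⟨hx, by rwa [← Subgroup.mem_inf]⟩, by simp, by simp⟩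
  obtain ⟨hy, ht, hyt⟩ := reducedSeq_cons_iff.1 hl
  by_cases hxy : DiffFactors A B x y
  · have hxC : ¬(x ∈ A ∧ x ∈ B) := by unfold DiffFactors IsLetter at *; tauto
    exact ⟨x :: y :: t, reducedSeq_cons_iff.2 ⟨⟨hx, hxC⟩, hl, by simpa⟩, by simp, by simp⟩
  have hsame : (x ∈ A ∧ y ∈ A) ∨ (x ∈ B ∧ y ∈ B) := by unfold DiffFactors at hxy; tauto
  by_cases hxyC : x * y ∈ A ⊓ B
  · rcases t with _ | ⟨y₂, t₂⟩
    · exact ⟨[], reducedSeq_nil, by simpa using hxyC, by simp⟩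
    · exact ⟨(x * y * y₂) :: t₂, ht.mul_head hxyC, by simp [mul_assoc], by simp⟩
  · obtain ⟨hA, hB⟩ := hy.mul_left_mem_iff hsame hxyC
    refine ⟨(x * y) :: t, reducedSeq_cons_iff.2 ⟨?_, ht, ?_⟩, ?_, by simp⟩
    · simpa only [IsLetter, hA, hB] using hy
    · simpa only [DiffFactors, hA, hB] using hyt
    · simp [mul_assoc]

lemma ReducedSeq.length_le_of_prod_inv_mul_mem (hAB : IsAmalgam A B) {w : List Γ}
    (hw : IsFactorWord A B w) {l : List Γ} (hl : ReducedSeq A B l)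
    (h : l.prod⁻¹ * w.prod ∈ A ⊓ B) : l.length ≤ w.length := by
  induction w generalizing l with
  | nil => simp [hl.eq_nil_of_prod_mem hAB (by simpa using h)]
  | cons x w ih =>
    have hx : x⁻¹ ∈ A ∨ x⁻¹ ∈ B := by simpa using hw x List.mem_cons_self
    obtain ⟨l', hl', hC, hlen⟩ := hl.exists_mul_left hx
    have hl'w : l'.length ≤ w.length := by
      refine ih (fun y hy => hw y (List.mem_cons_of_mem _ hy)) hl' ?_
      convert mul_mem hC h using 1
      simp only [List.prod_cons]
      group
    simp only [List.length_cons]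
    omega

lemma ReducedSeq.length_le_of_prod_eq (hAB : IsAmalgam A B) {l w : List Γ}
    (hl : ReducedSeq A B l) (hw : IsFactorWord A B w) (h : l.prod = w.prod) :
    l.length ≤ w.length :=
  hl.length_le_of_prod_inv_mul_mem hAB hw (by simp [h])

lemma ReducedSeq.length_le_one_of_prod_mem (hAB : IsAmalgam A B) {l : List Γ}
    (hl : ReducedSeq A B l) (h : l.prod ∈ A ∨ l.prod ∈ B) : l.length ≤ 1 :=
  hl.length_le_of_prod_eq hAB (isFactorWord_singleton h) (by simp)

lemma ReducedSeq.flatten_replicate {l : List Γ} (hl : ReducedSeq A B l)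
    (hcyc : ∀ x ∈ l.getLast?, ∀ y ∈ l.head?, DiffFactors A B x y) (k : ℕ) :
    ReducedSeq A B (List.replicate k l).flatten := by
  rcases eq_or_ne l [] with rfl | hne
  · simpa using reducedSeq_nil
  refine ⟨fun g hg => ?_, ?_⟩
  · obtain ⟨m, hm, hgm⟩ := List.mem_flatten.1 hg
    exact hl.1 g (List.eq_of_mem_replicate hm ▸ hgm)
  · exact (List.isChain_flatten (by simp [hne.symm])).2
      ⟨fun m hm => List.eq_of_mem_replicate hm ▸ hl.2, List.isChain_replicate_of_rel _ hcyc⟩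

lemma ReducedSeq.length_le_of_isConj (hAB : IsAmalgam A B) {l w : List Γ}
    (hl : ReducedSeq A B l) (hcyc : ∀ x ∈ l.getLast?, ∀ y ∈ l.head?, DiffFactors A B x y)
    (hw : IsFactorWord A B w) (hconj : IsConj w.prod l.prod) : l.length ≤ w.length := by
  obtain ⟨g, hg⟩ := isConj_iff.1 hconj
  obtain ⟨u, hu, rfl⟩ := exists_isFactorWord_prod_eq hAB.1 g
  obtain ⟨v, hv, hv'⟩ := exists_isFactorWord_prod_eq hAB.1 u.prod⁻¹
  set k := u.length + v.length + 1 with hk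
  have hword : IsFactorWord A B (u ++ (List.replicate k w).flatten ++ v) := by
    intro x hx
    simp only [List.mem_append, List.mem_flatten, List.mem_replicate] at hx
    rcases hx with (hx | ⟨m, ⟨-, rfl⟩, hx⟩) | hx
    exacts [hu x hx, hw x hx, hv x hx]
  have hpow := (hl.flatten_replicate hcyc k).length_le_of_prod_eq hAB hword (by
    simp only [List.prod_append, List.prod_flatten, List.map_replicate, List.prod_replicate, ← hg,
      conj_pow, hv'])
  simp only [List.length_flatten, List.map_replicate, List.sum_replicate, smul_eq_mul,
    List.length_append] at hpow
  have hlt : k * l.length < k * (w.length + 1) := by rw [mul_add]; omega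
  exact Nat.lt_succ_iff.1 (Nat.lt_of_mul_lt_mul_left hlt)

lemma AmLength.pos {g : Γ} {n : ℕ} (h : AmLength A B g n) : 0 < n := by
  rcases h with ⟨rfl, -⟩ | ⟨l, hne, -, -, rfl⟩
  exacts [Nat.one_pos, List.length_pos_iff.2 hne]

lemma AmLength.exists_isFactorWord {g : Γ} {n : ℕ} (h : AmLength A B g n) :
    ∃ w, IsFactorWord A B w ∧ w.prod = g ∧ w.length = n := by
  rcases h with ⟨rfl, hg⟩ | ⟨l, -, hl, hlg, hn⟩
  exacts [⟨[g], isFactorWord_singleton hg, by simp, rfl⟩, ⟨l, hl.isFactorWord, hlg, hn⟩]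

lemma AmLength.le_one (hAB : IsAmalgam A B) {g : Γ} {n : ℕ} (h : AmLength A B g n)
    (hg : g ∈ A ∨ g ∈ B) : n ≤ 1 := by
  rcases h with ⟨rfl, -⟩ | ⟨l, -, hl, rfl, rfl⟩
  exacts [le_rfl, hl.length_le_one_of_prod_mem hAB hg]

lemma AmLength.eq_length (hAB : IsAmalgam A B) {g : Γ} {n : ℕ} (h : AmLength A B g n)
    {l : List Γ} (hl : ReducedSeq A B l) (hlg : l.prod = g) (hne : l ≠ []) : n = l.length := by
  rcases h with ⟨rfl, hg⟩ | ⟨m, -, hm, hmg, rfl⟩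
  · have := hl.length_le_one_of_prod_mem hAB (hlg ▸ hg)
    have := List.length_pos_iff.2 hne
    omega
  · exact le_antisymm (hm.length_le_of_prod_eq hAB hl.isFactorWord (hmg.trans hlg.symm))
      (hl.length_le_of_prod_eq hAB hm.isFactorWord (hlg.trans hmg.symm))

lemma AmCyclicallyReduced.amLength_le_of_isConj (hAB : IsAmalgam A B) {γ γ' : Γ}
    (hγ' : AmCyclicallyReduced A B γ') (hconj : IsConj γ γ') {n n' : ℕ}
    (hn' : AmLength A B γ' n') (hn : AmLength A B γ n) : n' ≤ n := by
  obtain ⟨w, hw, rfl, rfl⟩ := hn.exists_isFactorWord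
  rcases hγ' with hfac | ⟨l, hl, rfl, hl2, x, y, hx, hy, hxy⟩
  · exact (hn'.le_one hAB hfac).trans hn.pos
  · rw [hn'.eq_length hAB hl rfl (List.ne_nil_of_length_pos (by omega))]
    refine hl.length_le_of_isConj hAB ?_ hw hconj
    simpa [hx, hy] using hxy.symm

end Amalgam

/-- Two conjugate cyclically reduced elements of an amalgam have the same
length. -/
theorem amalgam_conj_cyclicallyReduced_length_eq (A B : Subgroup Γ)
    (hAB : IsAmalgam A B) (γ γ' : Γ)
    (hγ : AmCyclicallyReduced A B γ) (hγ' : AmCyclicallyReduced A B γ')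
    (hconj : ∃ g : Γ, γ' = g * γ * g⁻¹)
    (n n' : ℕ) (hn : AmLength A B γ n) (hn' : AmLength A B γ' n') :
    n = n' := by
  have hconj : IsConj γ γ' := isConj_iff.2 (hconj.imp fun _ h => h.symm)
  exact le_antisymm (hγ.amLength_le_of_isConj hAB hconj.symm hn hn')
    (hγ'.amLength_le_of_isConj hAB hconj hn' hn)
end

section
/- Let Γ = A*_φ and let x, y ∈ Γ be commuting elements with x ∈ C_{+1} ∪ C_{-1}, and let y have reduced form y = y_1 t^{ε_1} y_2 ⋯ y_n t^{ε_n} y_{n+1}. Then there exists a sequence (c_0, c_1, …, c_{2n+1}) of elements of C_{+1} ∪ C_{-1} with c_0 = c_{2n+1} = x such that for each i, c_i and c_{i+1} are conjugate: by y_{i/2 + 1} when i is even, and by t^{ε_j} with j = (i−1)/2 + 1 when i is odd. -/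
/-!
Internal characterization of the HNN extension `Γ = A*_φ`:
`A` is a subgroup of `Γ`, `t ∈ Γ` is the stable letter, `Cm = C_{-1}` and
`Cp = C_{+1}` are subgroups of `A` with `t⁻¹ Cm t = Cp` (so
`φ(c) = t⁻¹ c t` for `c ∈ Cm`), `A ∪ {t}` generates `Γ`, and Britton's lemma
holds: a reduced word `g₀ t^{ε₁} g₁ ⋯ t^{εₙ} gₙ` with `n ≥ 1` is nontrivial.
-/

variable {Γ : Type*} [Group Γ]

/-- The subgroup `C_ε` : `C_{+1} = Cp` when `ε = 1`, and `C_{-1} = Cm`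
otherwise. -/
def toCsub (Cm Cp : Subgroup Γ) (ε : ℤ) : Subgroup Γ := if ε = 1 then Cp else Cm

/-- The pair `(g₀, [(ε₁, g₁), …, (εₙ, gₙ)])` encodes the word
`g₀ t^{ε₁} g₁ ⋯ t^{εₙ} gₙ`; it is reduced when all `gᵢ ∈ A`, all `εᵢ = ±1`,
and it contains no pinch `t^{εᵢ} gᵢ t^{-εᵢ}` with `gᵢ ∈ C_{εᵢ}`. -/
def HNNReducedWord (A Cm Cp : Subgroup Γ) (g₀ : Γ) (w : List (ℤ × Γ)) : Prop :=
  g₀ ∈ A ∧ (∀ p ∈ w, (p.1 = 1 ∨ p.1 = -1) ∧ p.2 ∈ A) ∧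
    w.Chain' fun p q => q.1 = -p.1 → p.2 ∉ toCsub Cm Cp p.1

/-- The element of `Γ` represented by the word
`g₀ t^{ε₁} g₁ ⋯ t^{εₙ} gₙ`. -/
def hnnProd (t g₀ : Γ) (w : List (ℤ × Γ)) : Γ :=
  g₀ * (w.map fun p => t ^ p.1 * p.2).prod

/-- `Γ` is the HNN extension of its subgroup `A` relative to the isomorphism
`φ : Cm → Cp`, `φ(c) = t⁻¹ c t`, with stable letter `t`. -/
def IsHNN (A Cm Cp : Subgroup Γ) (t : Γ) : Prop :=
  Cm ≤ A ∧ Cp ≤ A ∧ (∀ c : Γ, c ∈ Cm ↔ t⁻¹ * c * t ∈ Cp) ∧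
    Subgroup.closure ((A : Set Γ) ∪ {t}) = ⊤ ∧
    ∀ g₀ w, HNNReducedWord A Cm Cp g₀ w → w ≠ [] → hnnProd t g₀ w ≠ 1

/-- `g` is cyclically reduced: `g ∈ A` (length 1), or `g` has a reduced form
`g₁ t^{ε₁} g₂ ⋯ gₙ t^{εₙ} gₙ₊₁` with `gₙ₊₁ = 1` and either `n = 1` or
`t^{εₙ} g₁ t^{ε₁}` is not a pinch. -/
def HNNCyclicallyReduced (A Cm Cp : Subgroup Γ) (t g : Γ) : Prop :=
  g ∈ A ∨
    ∃ g₀ w, HNNReducedWord A Cm Cp g₀ w ∧ hnnProd t g₀ w = g ∧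
      ∃ p q, w.head? = some q ∧ w.getLast? = some p ∧ p.2 = 1 ∧
        (w.length = 1 ∨ ¬(q.1 = -p.1 ∧ g₀ ∈ toCsub Cm Cp p.1))

/-!
If `u, v ∈ A` and `u y = y v` for a reduced `y = g₀ t^{e} h ⋯` of length at least two, then
`g₀⁻¹ u g₀ ∈ C_{-e}`: otherwise `y⁻¹ u y`, written as the inverse of the reduced word followed by
`t^{-e} (g₀⁻¹ u g₀) t^{e} h ⋯`, is again a reduced word with a letter `t^{±1}`, so by Britton's
lemma it is not the element `v ∈ A`. Hence `u` passes through `C_{-e}` and `t^{-e}`-conjugation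
into `C_{e}`, and peeling off `g₀ t^{e}` one letter at a time yields the chain.
-/

section HNN

variable {A Cm Cp : Subgroup Γ} {t : Γ}

lemma toCsub_subset_union (Cm Cp : Subgroup Γ) (e : ℤ) :
    (toCsub Cm Cp e : Set Γ) ⊆ (Cp : Set Γ) ∪ (Cm : Set Γ) := by
  unfold toCsub
  split_ifs
  exacts [Set.subset_union_left, Set.subset_union_right]

lemma IsHNN.mem_of_mem_union (hH : IsHNN A Cm Cp t) {x : Γ}
    (hx : x ∈ (Cp : Set Γ) ∪ (Cm : Set Γ)) : x ∈ A :=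
  hx.elim (fun h => hH.2.1 h) (fun h => hH.1 h)

lemma IsHNN.zpow_conj_mem_toCsub (hH : IsHNN A Cm Cp t) {e : ℤ} (he : e = 1 ∨ e = -1)
    {a : Γ} (ha : a ∈ toCsub Cm Cp (-e)) : (t ^ e)⁻¹ * a * t ^ e ∈ toCsub Cm Cp e := by
  have hconj := hH.2.2.1
  rcases he with rfl | rfl
  · simpa [toCsub] using (hconj a).1 (by simpa [toCsub] using ha)
  · have ha : t⁻¹ * (t * a * t⁻¹) * t ∈ Cp := by simpa [toCsub, mul_assoc] using ha
    simpa [toCsub, mul_assoc] using (hconj _).2 ha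

lemma hnnProd_cons (t g₀ g : Γ) (e : ℤ) (w : List (ℤ × Γ)) :
    hnnProd t g₀ ((e, g) :: w) = g₀ * t ^ e * hnnProd t g w := by
  simp [hnnProd, mul_assoc]

lemma IsHNN.hnnProd_notMem (hH : IsHNN A Cm Cp t) {g₀ : Γ} {w : List (ℤ × Γ)}
    (hred : HNNReducedWord A Cm Cp g₀ w) (hw : w ≠ []) : hnnProd t g₀ w ∉ A := by
  intro hA
  refine hH.2.2.2.2 ((hnnProd t g₀ w)⁻¹ * g₀) w
    ⟨A.mul_mem (A.inv_mem hA) hred.1, hred.2.1, hred.2.2⟩ hw ?_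
  simp only [hnnProd]
  group

lemma HNNReducedWord.tail {g₀ h : Γ} {e : ℤ} {w : List (ℤ × Γ)}
    (hred : HNNReducedWord A Cm Cp g₀ ((e, h) :: w)) : HNNReducedWord A Cm Cp h w :=
  ⟨(hred.2.1 (e, h) List.mem_cons_self).2, fun p hp => hred.2.1 p (List.mem_cons_of_mem _ hp),
    hred.2.2.tail⟩

/-- `hnnInvAppend g₀ w acc` is the word for `(g₀ t^{e₁} g₁ ⋯ t^{eₙ} gₙ)⁻¹ * t^{e'₁} g'₁ ⋯`, where
`w = [(e₁, g₁), …]` and `acc = [(e'₁, g'₁), …]`, in the manner of `List.reverseAux`. -/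
def hnnInvAppend : Γ → List (ℤ × Γ) → List (ℤ × Γ) → Γ × List (ℤ × Γ)
  | g₀, [], acc => (g₀⁻¹, acc)
  | g₀, (e, g) :: w, acc => hnnInvAppend g w ((-e, g₀⁻¹) :: acc)

lemma hnnProd_hnnInvAppend (t : Γ) :
    ∀ (g₀ : Γ) (w acc : List (ℤ × Γ)),
      hnnProd t (hnnInvAppend g₀ w acc).1 (hnnInvAppend g₀ w acc).2 =
        (hnnProd t g₀ w)⁻¹ * (acc.map fun p => t ^ p.1 * p.2).prod
  | g₀, [], acc => by simp [hnnInvAppend, hnnProd]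
  | g₀, (e, g) :: w, acc => by
    rw [hnnInvAppend, hnnProd_hnnInvAppend t g w, hnnProd_cons]
    simp only [List.map_cons, List.prod_cons, zpow_neg]
    group

lemma length_hnnInvAppend :
    ∀ (g₀ : Γ) (w acc : List (ℤ × Γ)),
      (hnnInvAppend g₀ w acc).2.length = w.length + acc.length
  | g₀, [], acc => by simp [hnnInvAppend]
  | g₀, (e, g) :: w, acc => by
    rw [hnnInvAppend, length_hnnInvAppend g w]
    simp only [List.length_cons]
    omega

/-- Two consecutive letters `t^{p.1} p.2 t^{q.1}` of a word do not form a pinch. -/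
abbrev NoPinch (Cm Cp : Subgroup Γ) (p q : ℤ × Γ) : Prop :=
  q.1 = -p.1 → p.2 ∉ toCsub Cm Cp p.1

lemma isChain_noPinch_inv_cons {e : ℤ} {g b : Γ} {rest : List (ℤ × Γ)} :
    ∀ {w : List (ℤ × Γ)}, ((e, g) :: w).IsChain (NoPinch Cm Cp) →
      ((-e, b) :: rest).IsChain (NoPinch Cm Cp) →
      ∀ p ∈ w.head?, ((-p.1, g⁻¹) :: (-e, b) :: rest).IsChain (NoPinch Cm Cp)
  | [], _, _ => by simp
  | (e', g') :: _, hw, hrest => by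
    rintro p ⟨⟩
    refine List.isChain_cons_cons.2 ⟨fun he => ?_, hrest⟩
    simp only [neg_neg] at he
    have hpinch := (List.isChain_cons_cons.1 hw).1 he.symm
    simpa only [← he, neg_neg, inv_mem_iff] using hpinch

/-- The last hypothesis says that the first letter `t^{-e₁} g₀⁻¹` of the inverted word creates no
pinch with `acc`. -/
lemma HNNReducedWord.hnnInvAppend :
    ∀ {g₀ : Γ} {w acc : List (ℤ × Γ)}, HNNReducedWord A Cm Cp g₀ w →
      HNNReducedWord A Cm Cp 1 acc →
      (∀ p ∈ w.head?, ((-p.1, g₀⁻¹) :: acc).IsChain (NoPinch Cm Cp)) →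
      HNNReducedWord A Cm Cp (hnnInvAppend g₀ w acc).1 (hnnInvAppend g₀ w acc).2
  | g₀, [], acc, hw, hacc, _ => ⟨A.inv_mem hw.1, hacc.2⟩
  | g₀, (e, g) :: w, acc, hw, hacc, hjoin => by
    have he := (hw.2.1 (e, g) List.mem_cons_self).1
    have hacc' : HNNReducedWord A Cm Cp 1 ((-e, g₀⁻¹) :: acc) := by
      refine ⟨A.one_mem, fun p hp => ?_, hjoin (e, g) rfl⟩
      rcases List.mem_cons.1 hp with rfl | hp
      · exact ⟨by omega, A.inv_mem hw.1⟩
      · exact hacc.2.1 p hp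
    exact HNNReducedWord.hnnInvAppend (g₀ := g) (w := w) hw.tail hacc'
      (isChain_noPinch_inv_cons hw.2.2 hacc'.2.2)

lemma IsHNN.conj_mem_toCsub_of_mul_eq (hH : IsHNN A Cm Cp t) {g₀ h u v : Γ} {e : ℤ}
    {w : List (ℤ × Γ)} (hred : HNNReducedWord A Cm Cp g₀ ((e, h) :: w))
    (hu : u ∈ A) (hv : v ∈ A)
    (heq : u * hnnProd t g₀ ((e, h) :: w) = hnnProd t g₀ ((e, h) :: w) * v) :
    g₀⁻¹ * u * g₀ ∈ toCsub Cm Cp (-e) := by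
  by_contra ha
  set a := g₀⁻¹ * u * g₀
  have he := (hred.2.1 (e, h) List.mem_cons_self).1
  have hacc : HNNReducedWord A Cm Cp 1 ((-e, a) :: (e, h) :: w) := by
    refine ⟨A.one_mem, fun p hp => ?_, List.isChain_cons_cons.2 ⟨fun _ => ha, hred.2.2⟩⟩
    rcases List.mem_cons.1 hp with rfl | hp
    · exact ⟨by omega, A.mul_mem (A.mul_mem (A.inv_mem hred.1) hu) hred.1⟩
    · exact hred.2.1 p hp
  have hjoin := isChain_noPinch_inv_cons hred.2.2 hacc.2.2
  have hprod : hnnProd t (hnnInvAppend h w ((-e, a) :: (e, h) :: w)).1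
      (hnnInvAppend h w ((-e, a) :: (e, h) :: w)).2 = v := by
    rw [hnnProd_cons] at heq
    rw [hnnProd_hnnInvAppend, eq_inv_mul_of_mul_eq heq.symm]
    simp only [hnnProd, List.map_cons, List.prod_cons, zpow_neg, a]
    group
  refine hH.hnnProd_notMem (hred.tail.hnnInvAppend hacc hjoin) ?_ (hprod ▸ hv)
  rw [← List.length_pos_iff, length_hnnInvAppend]
  simp

lemma IsHNN.exists_conj_chain (hH : IsHNN A Cm Cp t) :
    ∀ (w : List (ℤ × Γ)) {g₀ u v : Γ}, HNNReducedWord A Cm Cp g₀ w →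
      u ∈ (Cp : Set Γ) ∪ (Cm : Set Γ) → v ∈ (Cp : Set Γ) ∪ (Cm : Set Γ) →
      u * hnnProd t g₀ w = hnnProd t g₀ w * v →
      ∃ c : ℕ → Γ, (∀ i ≤ 2 * w.length + 1, c i ∈ (Cp : Set Γ) ∪ (Cm : Set Γ)) ∧
        c 0 = u ∧ c (2 * w.length + 1) = v ∧ c 0 = g₀ * c 1 * g₀⁻¹ ∧
        ∀ (j : ℕ) (hj : j < w.length),
          c (2 * j + 1) = t ^ w[j].1 * c (2 * j + 2) * (t ^ w[j].1)⁻¹ ∧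
          c (2 * j + 2) = w[j].2 * c (2 * j + 3) * w[j].2⁻¹
  | [], g₀, u, v, _, hu, hv, heq => by
    refine ⟨fun i => if i = 0 then u else v, fun i _ => ?_, rfl, rfl, ?_, nofun⟩
    · dsimp only
      split_ifs
      exacts [hu, hv]
    · simp only [hnnProd, List.map_nil, List.prod_nil, mul_one] at heq
      simp only [if_pos, one_ne_zero, if_false]
      rw [← heq]
      group
  | (e, h) :: w, g₀, u, v, hred, hu, hv, heq => by
    have ha := hH.conj_mem_toCsub_of_mul_eq hred (hH.mem_of_mem_union hu)
      (hH.mem_of_mem_union hv) heq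
    set a := g₀⁻¹ * u * g₀
    set x := (t ^ e)⁻¹ * a * t ^ e
    have hx : x ∈ (Cp : Set Γ) ∪ (Cm : Set Γ) := toCsub_subset_union Cm Cp e
      (hH.zpow_conj_mem_toCsub (hred.2.1 (e, h) List.mem_cons_self).1 ha)
    have hxeq : x * hnnProd t h w = hnnProd t h w * v := by
      rw [hnnProd_cons] at heq
      calc x * hnnProd t h w = (g₀ * t ^ e)⁻¹ * (u * (g₀ * t ^ e * hnnProd t h w)) := by
            simp only [x, a]
            group
        _ = hnnProd t h w * v := by
            rw [heq]
            group
    obtain ⟨c, hc, hc0, hclast, hc1, hcj⟩ := hH.exists_conj_chain w hred.tail hx hv hxeq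
    refine ⟨fun | 0 => u | 1 => a | k + 2 => c k, ?_, rfl, ?_, ?_, ?_⟩
    · rintro (_ | _ | i) hi
      exacts [hu, toCsub_subset_union Cm Cp (-e) ha, hc i (by simp at hi; omega)]
    · simpa [Nat.mul_succ] using hclast
    · change u = g₀ * (g₀⁻¹ * u * g₀) * g₀⁻¹
      group
    · rintro (_ | j) hj
      · refine ⟨?_, hc1⟩
        change a = t ^ e * c 0 * (t ^ e)⁻¹
        simp only [hc0, x]
        group
      · exact hcj j (by simpa using hj)

end HNN

/-- Here `y1 = y₁`, `ys j = y_{j+2}` and `ε j = ε_{j+1}`. -/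
theorem hnn_commute_with_associated_subgroup (A Cm Cp : Subgroup Γ) (t : Γ)
    (hH : IsHNN A Cm Cp t) (x y : Γ) (n : ℕ)
    (y1 : Γ) (ε : Fin n → ℤ) (ys : Fin n → Γ)
    (hred : HNNReducedWord A Cm Cp y1 (List.ofFn fun i => (ε i, ys i)))
    (hprod : hnnProd t y1 (List.ofFn fun i => (ε i, ys i)) = y)
    (hx : x ∈ (Cp : Set Γ) ∪ (Cm : Set Γ))
    (hcomm : x * y = y * x) :
    ∃ c : ℕ → Γ, (∀ i ≤ 2 * n + 1, c i ∈ (Cp : Set Γ) ∪ (Cm : Set Γ)) ∧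
      c 0 = x ∧ c (2 * n + 1) = x ∧
      c 0 = y1 * c 1 * y1⁻¹ ∧
      ∀ j : Fin n,
        c (2 * (j : ℕ) + 1) = t ^ ε j * c (2 * (j : ℕ) + 2) * (t ^ ε j)⁻¹ ∧
        c (2 * (j : ℕ) + 2) = ys j * c (2 * (j : ℕ) + 3) * (ys j)⁻¹ := by
  subst hprod
  obtain ⟨c, hc, hc0, hclast, hc1, hcj⟩ := hH.exists_conj_chain _ hred hx hx hcomm
  rw [List.length_ofFn] at hc hclast
  exact ⟨c, hc, hc0, hclast, hc1, fun j => by simpa using hcj j (by simp)⟩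
end
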